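/- Let Ξ(z) = ∑_{n≥1} z^n/ξ(n) for complex z with |z| < 1 (the series converges absolutely since ξ(n) ≥ 1). Then for every complex z with |z| < 1, ∑_{n≥1} ((-1)^{Ω(n)}/ξ(n)) · Ξ(z^n) = z, the outer series converging absolutely. -/
import Mathlib


/-- `ξ(n) = ∏_p ν_p(n)!`. -/
def xi (n : ℕ) : ℕ := ∏ p ∈ n.primeFactors, Nat.factorial (n.factorization p)

/-- `Ω(n) = ∑_p ν_p(n)`. -/
def bigOmega (n : ℕ) : ℕ := ∑ p ∈ n.primeFactors, n.factorization p

/-- `Ξ(z) = ∑_{n≥1} z^n/ξ(n)`, the exponential generating function of the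
constant function `1`. -/
noncomputable def Xi (z : ℂ) : ℂ := ∑' n : ℕ, z ^ (n + 1) / (xi (n + 1) : ℂ)

open ArithmeticFunction Finset

lemma xi_eq (n : ℕ) : xi n = n.factorization.prod fun _ k => Nat.factorial k := rfl
lemma bigOmega_eq (n : ℕ) : bigOmega n = n.factorization.sum fun _ k => k := rfl
lemma xi_pos (n : ℕ) : 0 < xi n := Finset.prod_pos fun _ _ => Nat.factorial_pos _
@[simp] lemma xi_one : xi 1 = 1 := by simp [xi]
@[simp] lemma bigOmega_one : bigOmega 1 = 0 := by simp [bigOmega]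

lemma xi_mul {m n : ℕ} (hm : m ≠ 0) (hn : n ≠ 0) (h : Nat.Coprime m n) :
    xi (m * n) = xi m * xi n := by
  rw [xi_eq, xi_eq, xi_eq, Nat.factorization_mul hm hn,
    Finsupp.prod_add_index_of_disjoint]
  simpa using h.disjoint_primeFactors

lemma bigOmega_mul {m n : ℕ} (hm : m ≠ 0) (hn : n ≠ 0) :
    bigOmega (m * n) = bigOmega m + bigOmega n := by
  rw [bigOmega_eq, bigOmega_eq, bigOmega_eq, Nat.factorization_mul hm hn,
    Finsupp.sum_add_index' (by simp) (by simp)]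

lemma xi_prime_pow {p : ℕ} (hp : p.Prime) (k : ℕ) : xi (p ^ k) = Nat.factorial k := by
  rw [xi_eq, hp.factorization_pow, Finsupp.prod_single_index (by simp)]

lemma bigOmega_prime_pow {p : ℕ} (hp : p.Prime) (k : ℕ) : bigOmega (p ^ k) = k := by
  rw [bigOmega_eq, hp.factorization_pow, Finsupp.sum_single_index (by simp)]

/-- a(n) = λ(n)/ξ(n) as an arithmetic function. -/
noncomputable def Af : ArithmeticFunction ℂ :=
  ⟨fun n => if n = 0 then 0 else (-1) ^ bigOmega n / (xi n : ℂ), by simp⟩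

/-- b(n) = 1/ξ(n) as an arithmetic function. -/
noncomputable def Bf : ArithmeticFunction ℂ :=
  ⟨fun n => if n = 0 then 0 else 1 / (xi n : ℂ), by simp⟩

lemma Af_apply {n : ℕ} (hn : n ≠ 0) : Af n = (-1) ^ bigOmega n / (xi n : ℂ) := if_neg hn
lemma Bf_apply {n : ℕ} (hn : n ≠ 0) : Bf n = 1 / (xi n : ℂ) := if_neg hn

lemma xi_ne_zero (n : ℕ) : (xi n : ℂ) ≠ 0 := Nat.cast_ne_zero.2 (xi_pos n).ne'

lemma Af_mult : Af.IsMultiplicative := by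
  rw [ArithmeticFunction.IsMultiplicative.iff_ne_zero]
  refine ⟨by simp [Af_apply], fun {m n} hm hn h => ?_⟩
  rw [Af_apply (mul_ne_zero hm hn), Af_apply hm, Af_apply hn,
    xi_mul hm hn h, bigOmega_mul hm hn, pow_add, Nat.cast_mul]
  field_simp

lemma Bf_mult : Bf.IsMultiplicative := by
  rw [ArithmeticFunction.IsMultiplicative.iff_ne_zero]
  refine ⟨by simp [Bf_apply], fun {m n} hm hn h => ?_⟩
  rw [Bf_apply (mul_ne_zero hm hn), Bf_apply hm, Bf_apply hn, xi_mul hm hn h, Nat.cast_mul]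
  field_simp

lemma conv_prime_pow {p k : ℕ} (hp : p.Prime) (hk : k ≠ 0) : (Af * Bf) (p ^ k) = 0 := by
  rw [ArithmeticFunction.mul_apply, Nat.sum_divisorsAntidiagonal (f := fun x y => Af x * Bf y),
    Nat.sum_divisors_prime_pow hp]
  have h1 : ∀ i ∈ range (k + 1), Af (p ^ i) * Bf (p ^ k / p ^ i)
      = ((-1) ^ i * (k.choose i : ℂ)) * (1 / (Nat.factorial k : ℂ)) := by
    intro i hi
    rw [mem_range, Nat.lt_succ_iff] at hi
    rw [Nat.pow_div hi hp.pos, Af_apply (pow_ne_zero _ hp.pos.ne'),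
      Bf_apply (pow_ne_zero _ hp.pos.ne'), xi_prime_pow hp, xi_prime_pow hp,
      bigOmega_prime_pow hp]
    have hfac : ((k.choose i : ℂ)) * (Nat.factorial i) * (Nat.factorial (k - i))
        = (Nat.factorial k : ℂ) := by
      exact_mod_cast congrArg (Nat.cast : ℕ → ℂ) (Nat.choose_mul_factorial_mul_factorial hi)
    have h1 : (Nat.factorial i : ℂ) ≠ 0 := Nat.cast_ne_zero.2 (Nat.factorial_pos _).ne'
    have h2 : (Nat.factorial (k - i) : ℂ) ≠ 0 := Nat.cast_ne_zero.2 (Nat.factorial_pos _).ne'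
    have h3 : (Nat.factorial k : ℂ) ≠ 0 := Nat.cast_ne_zero.2 (Nat.factorial_pos _).ne'
    field_simp
    rw [← hfac]; ring
  rw [Finset.sum_congr rfl h1, ← Finset.sum_mul]
  have : (∑ i ∈ range (k + 1), (-1 : ℂ) ^ i * (k.choose i : ℂ)) = 0 := by
    have := Int.alternating_sum_range_choose (n := k)
    rw [if_neg hk] at this
    exact_mod_cast congrArg (Int.cast : ℤ → ℂ) this
  rw [this, zero_mul]

lemma conv_eq_zero {N : ℕ} (hN : 2 ≤ N) :
    ∑ x ∈ N.divisorsAntidiagonal, Af x.1 * Bf x.2 = 0 := by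
  rw [← ArithmeticFunction.mul_apply]
  have hmult := Af_mult.mul Bf_mult
  rw [hmult.multiplicative_factorization _ (by omega)]
  have hsupp : N.factorization.support.Nonempty := by
    rw [Nat.support_factorization]
    exact (Nat.nonempty_primeFactors).2 hN
  obtain ⟨p, hp⟩ := hsupp
  refine Finset.prod_eq_zero hp ?_
  exact conv_prime_pow (Nat.prime_of_mem_primeFactors (by simpa using hp))
    (Finsupp.mem_support_iff.mp hp)

lemma one_le_xi (n : ℕ) : (1 : ℝ) ≤ (xi n : ℝ) := by exact_mod_cast xi_pos n

lemma norm_Af_le (n : ℕ) : ‖Af n‖ ≤ 1 := by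
  rcases eq_or_ne n 0 with rfl | hn
  · simp [Af]
  · rw [Af_apply hn, norm_div, norm_pow, norm_neg, norm_one, one_pow]
    rw [Complex.norm_natCast]
    exact div_le_one_of_le₀ (one_le_xi n) (by positivity)

lemma norm_Bf_le (n : ℕ) : ‖Bf n‖ ≤ 1 := by
  rcases eq_or_ne n 0 with rfl | hn
  · simp [Bf]
  · rw [Bf_apply hn, norm_div, norm_one, Complex.norm_natCast]
    exact div_le_one_of_le₀ (one_le_xi n) (by positivity)

lemma summable_Xi_term {w : ℂ} (hw : ‖w‖ < 1) :
    Summable fun m : ℕ => w ^ (m + 1) / (xi (m + 1) : ℂ) := by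
  apply Summable.of_norm
  have hg : Summable fun m : ℕ => ‖w‖ ^ (m + 1) := by
    simpa [pow_succ, mul_comm] using
      (summable_geometric_of_lt_one (norm_nonneg w) hw).mul_left ‖w‖
  refine hg.of_nonneg_of_le (fun m => norm_nonneg _) fun m => ?_
  rw [norm_div, Complex.norm_natCast, norm_pow]
  calc ‖w‖ ^ (m+1) / (xi (m+1) : ℝ) ≤ ‖w‖ ^ (m+1) / 1 := by
        gcongr
        exact one_le_xi _
    _ = ‖w‖ ^ (m+1) := by ring

lemma hasSum_Xi {w : ℂ} (hw : ‖w‖ < 1) :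
    HasSum (fun m : ℕ => w ^ (m + 1) / (xi (m + 1) : ℂ)) (Xi w) :=
  (summable_Xi_term hw).hasSum

/-- For every complex `z` with `|z| < 1`,
`∑_{n≥1} ((-1)^{Ω(n)}/ξ(n))·Ξ(z^n) = z`, the series converging absolutely. -/
theorem sum_liouville_Xi_eq_id (z : ℂ) (hz : ‖z‖ < 1) :
    (Summable fun n : ℕ =>
      ‖(-1 : ℂ) ^ bigOmega (n + 1) / (xi (n + 1) : ℂ) * Xi (z ^ (n + 1))‖) ∧
    ∑' n : ℕ, (-1 : ℂ) ^ bigOmega (n + 1) / (xi (n + 1) : ℂ) * Xi (z ^ (n + 1)) = z := by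
  set r : ℝ := ‖z‖ with hr
  have hr0 : 0 ≤ r := norm_nonneg z
  -- the global double-series term
  set G : ℕ × ℕ → ℂ := fun p => Af p.1 * Bf p.2 * z ^ (p.1 * p.2) with hG
  have hGzero : ∀ p : ℕ × ℕ, p.1 = 0 ∨ p.2 = 0 → G p = 0 := by
    rintro ⟨a, b⟩ (rfl | rfl) <;> simp [hG]
  -- the shift injection
  set i : ℕ × ℕ → ℕ × ℕ := fun p => (p.1 + 1, p.2 + 1) with hi
  have hinj : Function.Injective i := by
    intro p q h
    simp only [hi, Prod.ext_iff] at h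
    exact Prod.ext (by omega) (by omega)
  have hrange : ∀ p : ℕ × ℕ, p ∉ Set.range i → G p = 0 := by
    rintro ⟨a, b⟩ hp
    rcases Nat.eq_zero_or_pos a with rfl | ha
    · exact hGzero _ (Or.inl rfl)
    rcases Nat.eq_zero_or_pos b with rfl | hb
    · exact hGzero _ (Or.inr rfl)
    exact absurd ⟨(a - 1, b - 1), by simp [hi]; omega⟩ hp
  -- summability of the shifted double series in norm
  have hmaj : Summable fun p : ℕ × ℕ => r ^ (p.1 + p.2 + 1) := by
    have := ((summable_geometric_of_lt_one hr0 hz).mul_of_nonneg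
      (summable_geometric_of_lt_one hr0 hz) (fun n => by positivity)
      (fun n => by positivity)).mul_left r
    refine this.congr fun p => ?_
    rw [pow_succ, pow_add]; ring
  have hGnorm' : Summable fun p : ℕ × ℕ => ‖G (i p)‖ := by
    refine hmaj.of_nonneg_of_le (fun p => norm_nonneg _) fun p => ?_
    have h1 : ‖G (i p)‖ ≤ r ^ ((p.1 + 1) * (p.2 + 1)) := by
      simp only [hG, hi]
      rw [norm_mul, norm_mul, norm_pow, ← hr]
      calc ‖Af (p.1+1)‖ * ‖Bf (p.2+1)‖ * r ^ ((p.1+1)*(p.2+1))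
          ≤ 1 * 1 * r ^ ((p.1+1)*(p.2+1)) := by
            gcongr
            · exact norm_Af_le _
            · exact norm_Bf_le _
        _ = r ^ ((p.1+1)*(p.2+1)) := by ring
    refine h1.trans ?_
    exact pow_le_pow_of_le_one hr0 hz.le (by nlinarith [p.1.zero_le, p.2.zero_le])
  have hGnorm : Summable fun p : ℕ × ℕ => ‖G p‖ :=
    (hinj.summable_iff (by intro x hx; rw [hrange x hx, norm_zero])).mp hGnorm'
  have hGsum : Summable G := hGnorm.of_norm
  have hG'sum : Summable fun p : ℕ × ℕ => G (i p) := hGnorm'.of_norm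
  -- each outer term is the inner sum
  have hterm : ∀ n : ℕ, HasSum (fun m => G (i (n, m)))
      ((-1 : ℂ) ^ bigOmega (n + 1) / (xi (n + 1) : ℂ) * Xi (z ^ (n + 1))) := by
    intro n
    have hzn : ‖z ^ (n + 1)‖ < 1 := by
      rw [norm_pow]
      calc r ^ (n+1) ≤ r ^ 1 := pow_le_pow_of_le_one hr0 hz.le (by omega)
        _ = r := pow_one r
        _ < 1 := hz
    have := (hasSum_Xi hzn).mul_left ((-1 : ℂ) ^ bigOmega (n + 1) / (xi (n + 1) : ℂ))
    refine this.congr_fun fun m => ?_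
    simp only [hG, hi]
    rw [Af_apply (Nat.succ_ne_zero n), Bf_apply (Nat.succ_ne_zero m), ← pow_mul]
    ring
  constructor
  · -- absolute summability of the outer series
    have hsum2 : Summable fun n : ℕ => ∑' m : ℕ, ‖G (i (n, m))‖ := hGnorm'.prod
    refine hsum2.of_nonneg_of_le (fun n => norm_nonneg _) fun n => ?_
    rw [← (hterm n).tsum_eq]
    exact norm_tsum_le_tsum_norm (hGnorm'.prod_factor n)
  · -- the evaluation
    have h1 : ∑' n : ℕ, (-1 : ℂ) ^ bigOmega (n + 1) / (xi (n + 1) : ℂ) * Xi (z ^ (n + 1))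
        = ∑' p : ℕ × ℕ, G (i p) := by
      rw [Summable.tsum_prod hG'sum]
      exact tsum_congr fun n => ((hterm n).tsum_eq).symm
    have h2 : ∑' p : ℕ × ℕ, G (i p) = ∑' p : ℕ × ℕ, G p :=
      hinj.tsum_eq (by
        intro p hp
        by_contra h
        exact hp (hrange p h))
    have hfib := (hGsum.hasSum.tsum_fiberwise fun p => p.1 * p.2).tsum_eq
    -- hfib : ∑' N, ∑' (p : (fun p => p.1*p.2) ⁻¹' {N}), G p = ∑' p, G p
    rw [h1, h2, ← hfib]
    have hfib1 : ∀ N : ℕ, N ≠ 1 →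
        (∑' p : (fun p : ℕ × ℕ => p.1 * p.2) ⁻¹' {N}, G p) = 0 := by
      intro N hN
      rcases Nat.eq_zero_or_pos N with rfl | hN0
      · calc (∑' p : (fun p : ℕ × ℕ => p.1 * p.2) ⁻¹' {(0:ℕ)}, G p)
            = ∑' _ : (fun p : ℕ × ℕ => p.1 * p.2) ⁻¹' {(0:ℕ)}, (0:ℂ) := by
              refine tsum_congr fun ⟨p, hp⟩ => ?_
              simp only [Set.mem_preimage, Set.mem_singleton_iff, Nat.mul_eq_zero] at hp
              exact hGzero p hp
          _ = 0 := tsum_zero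
      · have hN2 : 2 ≤ N := by omega
        have hset : (fun p : ℕ × ℕ => p.1 * p.2) ⁻¹' {N} = ↑(N.divisorsAntidiagonal) := by
          ext p
          simp only [Set.mem_preimage, Set.mem_singleton_iff, Finset.coe_sort_coe,
            Finset.mem_coe, Nat.mem_divisorsAntidiagonal]
          exact ⟨fun h => ⟨h, by omega⟩, fun h => h.1⟩
        rw [hset, Finset.tsum_subtype']
        have : ∀ p ∈ N.divisorsAntidiagonal, G p = Af p.1 * Bf p.2 * z ^ N := by
          intro p hp
          rw [Nat.mem_divisorsAntidiagonal] at hp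
          simp only [hG, hp.1]
        rw [Finset.sum_congr rfl this, ← Finset.sum_mul, conv_eq_zero hN2, zero_mul]
    rw [tsum_eq_single 1 hfib1]
    have hset1 : (fun p : ℕ × ℕ => p.1 * p.2) ⁻¹' {(1:ℕ)} = {((1:ℕ),(1:ℕ))} := by
      ext p
      simp only [Set.mem_preimage, Set.mem_singleton_iff, Prod.ext_iff, Set.mem_singleton_iff]
      constructor
      · intro h; exact ⟨Nat.eq_one_of_mul_eq_one_right h, Nat.eq_one_of_mul_eq_one_left h⟩
      · rintro ⟨h1, h2⟩; rw [h1, h2, mul_one]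
    rw [hset1, tsum_singleton]
    simp only [hG]
    rw [Af_apply one_ne_zero, Bf_apply one_ne_zero]
    simp
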